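/- In every orthomodular lattice L, the n = 2 instance of the 2n-variable Godowski form holds: for all a₁, b₁, a₂, b₂ ∈ L, if a₁ ⊥ b₁, b₁ ⊥ a₂, a₂ ⊥ b₂, and b₂ ⊥ a₁, then (a₁ ∪ b₁) ∩ (a₂ ∪ b₂) ≤ b₁ ∪ a₂. -/
import Mathlib


/-- An ortholattice: a bounded lattice with an orthocomplementation. -/
class Ortholattice (α : Type*) extends Lattice α, BoundedOrder α where
  ocompl : α → α
  sup_ocompl : ∀ a : α, a ⊔ ocompl a = ⊤
  inf_ocompl : ∀ a : α, a ⊓ ocompl a = ⊥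
  ocompl_anti : ∀ a b : α, a ≤ b → ocompl b ≤ ocompl a
  ocompl_ocompl : ∀ a : α, ocompl (ocompl a) = a

postfix:max "ᗮ" => Ortholattice.ocompl

/-- An orthomodular lattice. -/
class OrthomodularLattice (α : Type*) extends Ortholattice α where
  orthomodular : ∀ a b : α, a ≤ b → b = a ⊔ (aᗮ ⊓ b)

/-- The Sasaki hook `x → y = x′ ∪ (x ∩ y)`. -/
def oimp {α : Type*} [Ortholattice α] (x y : α) : α := xᗮ ⊔ (x ⊓ y)

section Aux

variable {α : Type*}

lemma ocompl_le_comm [Ortholattice α] {a b : α} (h : a ≤ bᗮ) : b ≤ aᗮ := by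
  have := Ortholattice.ocompl_anti _ _ h
  rwa [Ortholattice.ocompl_ocompl] at this

lemma le_ocompl_sup [Ortholattice α] {a b c : α} (ha : c ≤ aᗮ) (hb : c ≤ bᗮ) :
    c ≤ (a ⊔ b)ᗮ := by
  have h1 : a ⊔ b ≤ cᗮ := sup_le (ocompl_le_comm ha) (ocompl_le_comm hb)
  exact ocompl_le_comm h1

lemma sup_inf_ocompl_eq [OrthomodularLattice α] {a b : α} (h : a ≤ bᗮ) :
    (a ⊔ b) ⊓ bᗮ = a := by
  have h1 : a ≤ (a ⊔ b) ⊓ bᗮ := le_inf le_sup_left h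
  have h2 := OrthomodularLattice.orthomodular _ _ h1
  have h3 : aᗮ ⊓ ((a ⊔ b) ⊓ bᗮ) = ⊥ := by
    have hle : aᗮ ⊓ ((a ⊔ b) ⊓ bᗮ) ≤ (a ⊔ b) ⊓ (a ⊔ b)ᗮ := by
      refine le_inf ?_ ?_
      · exact le_trans inf_le_right inf_le_left
      · refine le_trans (le_inf inf_le_left (le_trans inf_le_right inf_le_right)) ?_
        exact le_ocompl_sup inf_le_left inf_le_right
    have := Ortholattice.inf_ocompl (a ⊔ b)
    exact le_antisymm (this ▸ hle) bot_le
  rw [h3, sup_bot_eq] at h2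
  exact h2

end Aux

theorem two_go_holds {α : Type*} [OrthomodularLattice α]
    (a₁ b₁ a₂ b₂ : α)
    (h1 : a₁ ≤ b₁ᗮ) (h2 : b₁ ≤ a₂ᗮ) (h3 : a₂ ≤ b₂ᗮ) (h4 : b₂ ≤ a₁ᗮ) :
    (a₁ ⊔ b₁) ⊓ (a₂ ⊔ b₂) ≤ b₁ ⊔ a₂ := by
  set z := (a₁ ⊔ b₁) ⊓ (a₂ ⊔ b₂) with hz
  set s := b₁ᗮ ⊓ (b₁ ⊔ z) with hsdef
  have hom : b₁ ⊔ z = b₁ ⊔ s :=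
    OrthomodularLattice.orthomodular b₁ (b₁ ⊔ z) le_sup_left
  -- s ≤ a₁
  have hs1 : s ≤ a₁ := by
    have hzx : b₁ ⊔ z ≤ a₁ ⊔ b₁ := sup_le le_sup_right inf_le_left
    have : s ≤ (a₁ ⊔ b₁) ⊓ b₁ᗮ :=
      le_inf (le_trans inf_le_right hzx) inf_le_left
    rwa [sup_inf_ocompl_eq h1] at this
  -- s ≤ a₂
  have ha1B : a₁ ≤ (b₁ ⊔ b₂)ᗮ := le_ocompl_sup h1 (ocompl_le_comm h4)
  have ha2B : a₂ ≤ (b₁ ⊔ b₂)ᗮ := le_ocompl_sup (ocompl_le_comm h2) h3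
  have hs2 : s ≤ a₂ := by
    have hzy : b₁ ⊔ z ≤ a₂ ⊔ (b₁ ⊔ b₂) := by
      refine sup_le (le_trans le_sup_left le_sup_right) ?_
      refine le_trans inf_le_right (sup_le le_sup_left ?_)
      exact le_trans le_sup_right le_sup_right
    have : s ≤ (a₂ ⊔ (b₁ ⊔ b₂)) ⊓ (b₁ ⊔ b₂)ᗮ :=
      le_inf (le_trans inf_le_right hzy) (le_trans hs1 ha1B)
    rwa [sup_inf_ocompl_eq ha2B] at this
  calc z ≤ b₁ ⊔ z := le_sup_right
    _ = b₁ ⊔ s := hom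
    _ ≤ b₁ ⊔ a₂ := sup_le_sup_left hs2 _
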